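/- arXiv:1105.2391 — 2 statements merged into one kernel-verified Lean document; each statement's English description precedes it below -/
import Mathlib

section
/- (Lemma: second matching bound.) Let c be a metric on V, let x be a feasible solution of the path-variant Held-Karp relaxation with respect to s and t, let H be a spanning tree of the complete graph on V with c(H) ≤ c(x) (e.g. a minimum spanning tree), and let T be the wrong-parity set of H. Then there exists a perfect matching M on T with c(M) ≤ c(x) − c(s,t). -/
open Finset

namespace TSPPath

noncomputable section
open scoped Classical

/-- Edge set of the complete graph on `Fin n`: all unordered pairs of distinct vertices. -/
def Edges (n : ℕ) : Finset (Sym2 (Fin n)) := Finset.univ.filter (fun e => ¬ e.IsDiag)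

/-- `cutSet n S` is `δ(S)`: the edges with exactly one endpoint in `S`. -/
def cutSet (n : ℕ) (S : Finset (Fin n)) : Finset (Sym2 (Fin n)) :=
  (Edges n).filter (fun e => ∃ u v : Fin n, e = s(u, v) ∧ u ∈ S ∧ v ∉ S)

/-- `inSet n S` is `E(S)`: the edges with both endpoints in `S`. -/
def inSet (n : ℕ) (S : Finset (Fin n)) : Finset (Sym2 (Fin n)) :=
  (Edges n).filter (fun e => ∀ v ∈ e, v ∈ S)

/-- Degree of a vertex in an edge set. -/
def deg (n : ℕ) (H : Finset (Sym2 (Fin n))) (v : Fin n) : ℕ :=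
  (H.filter (fun e => v ∈ e)).card

/-- Degree of a vertex in an edge multiset (counting multiplicity). -/
def mdeg (n : ℕ) (L : Multiset (Sym2 (Fin n))) (v : Fin n) : ℕ :=
  (L.filter (fun e => v ∈ e)).card

/-- Feasibility for the path-variant Held–Karp relaxation with endpoints `s, t`. -/
def HKPathFeasible (n : ℕ) (s t : Fin n) (x : Sym2 (Fin n) → ℝ) : Prop :=
  (∀ e, 0 ≤ x e) ∧
  (∑ e ∈ cutSet n {s}, x e = 1) ∧
  (∑ e ∈ cutSet n {t}, x e = 1) ∧
  (∀ v : Fin n, v ≠ s → v ≠ t → ∑ e ∈ cutSet n {v}, x e = 2) ∧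
  (∀ S : Finset (Fin n), S.Nonempty → S ≠ Finset.univ →
      ((s ∈ S ∧ t ∉ S) ∨ (s ∉ S ∧ t ∈ S)) → 1 ≤ ∑ e ∈ cutSet n S, x e) ∧
  (∀ S : Finset (Fin n), S.Nonempty → S ≠ Finset.univ →
      ¬((s ∈ S ∧ t ∉ S) ∨ (s ∉ S ∧ t ∈ S)) → 2 ≤ ∑ e ∈ cutSet n S, x e)

/-- `c` is a metric: nonnegative, symmetric, vanishing on the diagonal, triangle inequality. -/
def IsMetric (n : ℕ) (c : Fin n → Fin n → ℝ) : Prop :=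
  (∀ u v, 0 ≤ c u v) ∧ (∀ u v, c u v = c v u) ∧ (∀ u, c u u = 0) ∧
  (∀ u v w, c u w ≤ c u v + c v w)

/-- Cost of an unordered edge (defined by symmetrization, which agrees with `c u v`
whenever `c` is symmetric). -/
def ecost (n : ℕ) (c : Fin n → Fin n → ℝ) (e : Sym2 (Fin n)) : ℝ :=
  Sym2.lift ⟨fun u v => (c u v + c v u) / 2, by intro u v; ring⟩ e

/-- `c(x) = ∑_{e ∈ E} x_e c(e)`. -/
def xcost (n : ℕ) (c : Fin n → Fin n → ℝ) (x : Sym2 (Fin n) → ℝ) : ℝ :=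
  ∑ e ∈ Edges n, x e * ecost n c e

/-- `c(F) = ∑_{e ∈ F} c(e)` for an edge set `F`. -/
def fcost (n : ℕ) (c : Fin n → Fin n → ℝ) (F : Finset (Sym2 (Fin n))) : ℝ :=
  ∑ e ∈ F, ecost n c e

/-- `H` is (the edge set of) a spanning tree of the complete graph on `Fin n`. -/
def IsSpanningTree (n : ℕ) (H : Finset (Sym2 (Fin n))) : Prop :=
  H ⊆ Edges n ∧ (SimpleGraph.fromEdgeSet (H : Set (Sym2 (Fin n)))).Connected ∧
    H.card = n - 1

/-- The wrong-parity set of an edge set `H`: internal vertices of odd degree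
together with the endpoints of even degree. -/
def wrongParity (n : ℕ) (s t : Fin n) (H : Finset (Sym2 (Fin n))) : Finset (Fin n) :=
  Finset.univ.filter (fun v =>
    if v = s ∨ v = t then Even (deg n H v) else Odd (deg n H v))

/-- `M` is a perfect matching on the vertex set `T`: vertex-disjoint edges covering
exactly the vertices of `T`. -/
def IsPerfectMatchingOn (n : ℕ) (T : Finset (Fin n)) (M : Finset (Sym2 (Fin n))) : Prop :=
  M ⊆ Edges n ∧ (∀ v ∈ T, deg n M v = 1) ∧ (∀ v : Fin n, v ∉ T → deg n M v = 0)

/-- `J` is a `T`-join: exactly the vertices of `T` have odd degree in `J`. -/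
def IsTJoin (n : ℕ) (T : Finset (Fin n)) (J : Finset (Sym2 (Fin n))) : Prop :=
  J ⊆ Edges n ∧ ∀ v : Fin n, Odd (deg n J v) ↔ v ∈ T

/-- There is a Hamiltonian path from `s` to `t` in the complete graph on `Fin n`
of cost (w.r.t. the metric `c`) at most `B`. -/
def ExistsHamPath (n : ℕ) (s t : Fin n) (c : Fin n → Fin n → ℝ) (B : ℝ) : Prop :=
  ∃ p : (⊤ : SimpleGraph (Fin n)).Walk s t,
    p.IsHamiltonian ∧ (p.edges.map (ecost n c)).sum ≤ B

/-- Connectivity of the multigraph `(V, L)` (equivalently, of its support graph,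
which must span all of `Fin n`). -/
def MConnected (n : ℕ) (L : Multiset (Sym2 (Fin n))) : Prop :=
  (SimpleGraph.fromEdgeSet {e | e ∈ L}).Connected

/-- The multiset of edges traversed by the walk given by a vertex list `w`. -/
def walkEdges (n : ℕ) (w : List (Fin n)) : Multiset (Sym2 (Fin n)) :=
  ((w.zip w.tail).map (fun p => s(p.1, p.2)) : List (Sym2 (Fin n)))

/-- `w` is an Eulerian trail from `s` to `t` of the edge multiset `L`: a walk from `s`
to `t` whose multiset of traversed edges is exactly `L` (with multiplicity). -/
def IsEulerianTrail (n : ℕ) (L : Multiset (Sym2 (Fin n))) (s t : Fin n)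
    (w : List (Fin n)) : Prop :=
  w.head? = some s ∧ w.getLast? = some t ∧ walkEdges n w = L

/-!
Let `P` be the `s`–`t` path in the tree `H`. Deleting `P` flips the parity of the degree exactly
at `s` and `t`, so `H \ P` is a `T`-join for the wrong-parity set `T` of `H`, and
`c(H \ P) = c(H) - c(P) ≤ c(x) - c(s,t)` by the triangle inequality along `P`. Any `T`-join can
be shortcut to a perfect matching on `T` of no larger cost: repeatedly pick two vertices of `T`
in the same component, replace a path joining them by the direct edge, and recurse on the rest.
-/

theorem _root_.SimpleGraph.exists_ne_odd_degree_reachable {V : Type*} [Fintype V]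
    (G : SimpleGraph V) [DecidableRel G.Adj] {v : V} (hv : Odd (G.degree v)) :
    ∃ w, w ≠ v ∧ Odd (G.degree w) ∧ G.Reachable v w := by
  -- Handshaking in the connected component of `v`, seen as a spanning subgraph.
  let G' : SimpleGraph V :=
    { Adj := fun a b => G.Adj a b ∧ G.Reachable v a
      symm := ⟨fun _ _ h => ⟨h.1.symm, h.2.trans h.1.reachable⟩⟩
      loopless := ⟨fun _ h => G.irrefl h.1⟩ }
  have hdeg : ∀ u, G.Reachable v u → G'.degree u = G.degree u := by
    intro u hu
    simp only [← SimpleGraph.card_neighborFinset_eq_degree, SimpleGraph.neighborFinset_eq_filter]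
    congr 1
    ext b
    simp [G', hu]
  obtain ⟨w, hwv, hw⟩ := G'.exists_ne_odd_degree_of_exists_odd_degree v (by rwa [hdeg v .rfl])
  obtain ⟨_, -, hreach⟩ := (G'.degree_pos_iff_exists_adj w).mp hw.pos
  exact ⟨w, hwv, hdeg w hreach ▸ hw, hreach⟩

lemma mem_Edges {n : ℕ} {e : Sym2 (Fin n)} : e ∈ Edges n ↔ ¬ e.IsDiag := by
  simp [Edges]

lemma ecost_mk {n : ℕ} {c : Fin n → Fin n → ℝ} (hc : ∀ u v, c u v = c v u) (u v : Fin n) :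
    ecost n c s(u, v) = c u v := by
  simp only [ecost, Sym2.lift_mk, hc v u]
  ring

lemma ecost_nonneg {n : ℕ} {c : Fin n → Fin n → ℝ} (hc : ∀ u v, 0 ≤ c u v)
    (e : Sym2 (Fin n)) : 0 ≤ ecost n c e := by
  induction e using Sym2.ind with
  | _ u v => simp only [ecost, Sym2.lift_mk]; linarith [hc u v, hc v u]

lemma IsMetric.le_sum_ecost_edges {n : ℕ} {c : Fin n → Fin n → ℝ} (hc : IsMetric n c)
    {G : SimpleGraph (Fin n)} {a b : Fin n} (p : G.Walk a b) :
    c a b ≤ (p.edges.map (ecost n c)).sum := by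
  induction p with
  | nil => simp [hc.2.2.1]
  | @cons u v w _ q ih =>
    rw [SimpleGraph.Walk.edges_cons, List.map_cons, List.sum_cons, ecost_mk hc.2.1]
    linarith [hc.2.2.2 u v w]

lemma deg_eq_degree_fromEdgeSet {n : ℕ} {J : Finset (Sym2 (Fin n))} (hJ : J ⊆ Edges n)
    (v : Fin n) : deg n J v = (SimpleGraph.fromEdgeSet (J : Set (Sym2 (Fin n)))).degree v := by
  have hE : (SimpleGraph.fromEdgeSet (J : Set (Sym2 (Fin n)))).edgeFinset = J := by
    ext e
    simpa [SimpleGraph.edgeFinset, SimpleGraph.edgeSet_fromEdgeSet] using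
      fun he => mem_Edges.mp (hJ he)
  rw [← SimpleGraph.card_incidenceFinset_eq_degree, SimpleGraph.incidenceFinset_eq_filter, hE,
    deg]

lemma deg_list_toFinset {n : ℕ} {l : List (Sym2 (Fin n))} (hl : l.Nodup) (u : Fin n) :
    deg n l.toFinset u = l.countP (fun e => u ∈ e) := by
  have hfilter : l.toFinset.filter (fun e => u ∈ e) = (l.filter (fun e => u ∈ e)).toFinset := by
    ext e
    simp
  rw [deg, hfilter, List.card_toFinset, (hl.filter _).dedup, List.countP_eq_length_filter]

lemma deg_sdiff_add {n : ℕ} {P J : Finset (Sym2 (Fin n))} (h : P ⊆ J) (v : Fin n) :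
    deg n (J \ P) v + deg n P v = deg n J v := by
  rw [deg, deg, ← card_union_of_disjoint (disjoint_filter_filter sdiff_disjoint), ← filter_union,
    sdiff_union_of_subset h, deg]

lemma odd_deg_sdiff_iff {n : ℕ} {P J : Finset (Sym2 (Fin n))} (h : P ⊆ J) (v : Fin n) :
    Odd (deg n (J \ P) v) ↔ ¬ (Odd (deg n J v) ↔ Odd (deg n P v)) := by
  rw [← deg_sdiff_add h v, Nat.odd_add, ← Nat.not_odd_iff_even]
  tauto

lemma deg_insert {n : ℕ} {M : Finset (Sym2 (Fin n))} {e : Sym2 (Fin n)} (he : e ∉ M)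
    (v : Fin n) : deg n (insert e M) v = deg n M v + if v ∈ e then 1 else 0 := by
  unfold deg
  rw [filter_insert]
  split_ifs
  · exact card_insert_of_notMem (fun h => he (mem_of_mem_filter _ h))
  · rfl

lemma odd_deg_edges_toFinset_iff {n : ℕ} {G : SimpleGraph (Fin n)} {v w : Fin n}
    {p : G.Walk v w} (hp : p.IsTrail) (hvw : v ≠ w) (u : Fin n) :
    Odd (deg n p.edges.toFinset u) ↔ u = v ∨ u = w := by
  rw [deg_list_toFinset hp.edges_nodup, ← Nat.not_even_iff_odd, hp.even_countP_edges_iff u]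
  tauto

lemma IsMetric.le_fcost_edges_toFinset {n : ℕ} {c : Fin n → Fin n → ℝ} (hc : IsMetric n c)
    {G : SimpleGraph (Fin n)} {v w : Fin n} {p : G.Walk v w} (hp : p.IsTrail) :
    c v w ≤ fcost n c p.edges.toFinset := by
  rw [fcost, List.sum_toFinset _ hp.edges_nodup]
  exact hc.le_sum_ecost_edges p

lemma IsMetric.exists_subset_odd_deg_iff_le_fcost {n : ℕ} {c : Fin n → Fin n → ℝ}
    (hc : IsMetric n c) {J : Finset (Sym2 (Fin n))} {v w : Fin n}
    (hvw_reach : (SimpleGraph.fromEdgeSet (J : Set (Sym2 (Fin n)))).Reachable v w)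
    (hvw : v ≠ w) :
    ∃ P ⊆ J, (∀ u, Odd (deg n P u) ↔ u = v ∨ u = w) ∧ c v w ≤ fcost n c P := by
  obtain ⟨q⟩ := hvw_reach
  have hp := q.toPath.2.isTrail
  refine ⟨q.toPath.1.edges.toFinset, fun e he => ?_, odd_deg_edges_toFinset_iff hp hvw,
    hc.le_fcost_edges_toFinset hp⟩
  have he' := q.toPath.1.edges_subset_edgeSet (List.mem_toFinset.mp he)
  rw [SimpleGraph.edgeSet_fromEdgeSet] at he'
  exact he'.1

lemma IsPerfectMatchingOn.mk_notMem {n : ℕ} {T : Finset (Fin n)} {M : Finset (Sym2 (Fin n))}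
    (hM : IsPerfectMatchingOn n T M) {v : Fin n} (hv : v ∉ T) (w : Fin n) : s(v, w) ∉ M := by
  intro h
  have hpos : 0 < deg n M v := card_pos.mpr ⟨s(v, w), mem_filter.mpr ⟨h, Sym2.mem_mk_left v w⟩⟩
  rw [hM.2.2 v hv] at hpos
  exact hpos.false

lemma IsPerfectMatchingOn.insert_edge {n : ℕ} {T : Finset (Fin n)} {M : Finset (Sym2 (Fin n))}
    (hM : IsPerfectMatchingOn n T M) {v w : Fin n} (hvw : v ≠ w) (hv : v ∉ T) (hw : w ∉ T) :
    IsPerfectMatchingOn n (insert v (insert w T)) (insert s(v, w) M) := by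
  have hnotin := hM.mk_notMem hv w
  obtain ⟨hME, hT, hTc⟩ := hM
  refine ⟨insert_subset (mem_Edges.mpr (by simpa using hvw)) hME, fun u hu => ?_, fun u hu => ?_⟩
  · rw [deg_insert hnotin]
    rcases mem_insert.mp hu with rfl | hu
    · simp [hTc u hv]
    rcases mem_insert.mp hu with rfl | hu
    · simp [hTc u hw]
    have : u ∉ s(v, w) := by
      rw [Sym2.mem_iff]
      rintro (rfl | rfl) <;> contradiction
    simp [hT u hu, this]
  · simp only [mem_insert, not_or] at hu
    rw [deg_insert hnotin, hTc u hu.2.2, if_neg (by simpa using ⟨hu.1, hu.2.1⟩)]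

lemma IsTJoin.exists_isPerfectMatchingOn_fcost_le {n : ℕ} {c : Fin n → Fin n → ℝ}
    (hc : IsMetric n c) {T : Finset (Fin n)} {J : Finset (Sym2 (Fin n))} (hJ : IsTJoin n T J) :
    ∃ M, IsPerfectMatchingOn n T M ∧ fcost n c M ≤ fcost n c J := by
  induction J using Finset.strongInduction generalizing T with
  | H J ih =>
    obtain ⟨hJE, hJT⟩ := hJ
    rcases T.eq_empty_or_nonempty with rfl | ⟨v, hvT⟩
    · refine ⟨∅, ⟨empty_subset _, by simp, fun u _ => by simp [deg]⟩, ?_⟩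
      simpa [fcost] using sum_nonneg fun e _ => ecost_nonneg hc.1 e
    obtain ⟨w, hwv, hwJ, hreach⟩ := SimpleGraph.exists_ne_odd_degree_reachable _
      (by rwa [← deg_eq_degree_fromEdgeSet hJE, hJT])
    rw [← deg_eq_degree_fromEdgeSet hJE, hJT] at hwJ
    obtain ⟨P, hPJ, hP, hPc⟩ := hc.exists_subset_odd_deg_iff_le_fcost hreach hwv.symm
    have hPne : P.Nonempty := (card_pos.mp ((hP v).mpr (.inl rfl)).pos).mono (filter_subset _ _)
    have hJ' : IsTJoin n ((T.erase v).erase w) (J \ P) := by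
      refine ⟨sdiff_subset.trans hJE, fun u => ?_⟩
      rw [odd_deg_sdiff_iff hPJ, hJT, hP, mem_erase, mem_erase]
      by_cases huv : u = v <;> by_cases huw : u = w <;> simp_all
    obtain ⟨M, hM, hMc⟩ := ih _ (sdiff_ssubset hPJ hPne) hJ'
    have hvT' : v ∉ (T.erase v).erase w := by simp
    have hwT' : w ∉ (T.erase v).erase w := by simp
    have hM' := hM.insert_edge hwv.symm hvT' hwT'
    rw [insert_erase (mem_erase.mpr ⟨hwv, hwJ⟩), insert_erase hvT] at hM'
    refine ⟨_, hM', ?_⟩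
    have hsplit : fcost n c (J \ P) + fcost n c P = fcost n c J := sum_sdiff hPJ
    rw [fcost, sum_insert (hM.mk_notMem hvT' w), ← fcost, ecost_mk hc.2.1]
    linarith

lemma isTJoin_wrongParity_sdiff {n : ℕ} {s t : Fin n} {H P : Finset (Sym2 (Fin n))}
    (hHE : H ⊆ Edges n) (hPH : P ⊆ H) (hP : ∀ u, Odd (deg n P u) ↔ u = s ∨ u = t) :
    IsTJoin n (wrongParity n s t H) (H \ P) := by
  refine ⟨sdiff_subset.trans hHE, fun u => ?_⟩
  rw [odd_deg_sdiff_iff hPH, hP, wrongParity, mem_filter, ← Nat.not_odd_iff_even]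
  split_ifs <;> simp_all

theorem second_matching_bound_general (n : ℕ) (s t : Fin n) (hst : s ≠ t)
    (c : Fin n → Fin n → ℝ) (hc : IsMetric n c)
    (x : Sym2 (Fin n) → ℝ)
    (H : Finset (Sym2 (Fin n))) (hH : IsSpanningTree n H)
    (hHc : fcost n c H ≤ xcost n c x) :
    ∃ M : Finset (Sym2 (Fin n)), IsPerfectMatchingOn n (wrongParity n s t H) M ∧
      fcost n c M ≤ xcost n c x - c s t := by
  obtain ⟨hHE, hHconn, -⟩ := hH
  obtain ⟨P, hPH, hP, hPc⟩ := hc.exists_subset_odd_deg_iff_le_fcost (hHconn.preconnected s t) hst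
  obtain ⟨M, hM, hMc⟩ :=
    (isTJoin_wrongParity_sdiff hHE hPH hP).exists_isPerfectMatchingOn_fcost_le hc
  have hsplit : fcost n c (H \ P) + fcost n c P = fcost n c H := sum_sdiff hPH
  exact ⟨M, hM, by linarith⟩

/-- (Second matching bound.) For a metric `c`, a feasible Held–Karp
solution `x`, and a spanning tree `H` with `c(H) ≤ c(x)` and wrong-parity set `T`, there
is a perfect matching `M` on `T` with `c(M) ≤ c(x) − c(s,t)`. -/
theorem second_matching_bound (n : ℕ) (hn : 2 ≤ n) (s t : Fin n) (hst : s ≠ t)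
    (c : Fin n → Fin n → ℝ) (hc : IsMetric n c)
    (x : Sym2 (Fin n) → ℝ) (hx : HKPathFeasible n s t x)
    (H : Finset (Sym2 (Fin n))) (hH : IsSpanningTree n H)
    (hHc : fcost n c H ≤ xcost n c x) :
    ∃ M : Finset (Sym2 (Fin n)), IsPerfectMatchingOn n (wrongParity n s t H) M ∧
      fcost n c M ≤ xcost n c x - c s t :=
  second_matching_bound_general n s t hst c hc x H hH hHc

end
end TSPPath
end

section
/- (Path Held-Karp polytope lies in the spanning tree polytope.) Every feasible solution x of the path-variant Held-Karp relaxation with respect to s and t satisfies x(E) = n − 1 and x(E(S)) ≤ |S| − 1 for every nonempty subset S ⊆ V; that is, x lies in the spanning tree polytope of the complete graph on V. -/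
open Finset

namespace TSPPath

noncomputable section
open scoped Classical

/-! Summing the degree constraints over `S` counts every edge of `E(S)` twice and every edge of
`δ(S)` once: `2 x(E(S)) + x(δ(S)) = 2|S| - |S ∩ {s, t}|`. The cut constraints say exactly that
`x(δ(S)) ≥ 2 - |S ∩ {s, t}|`, which gives `x(E(S)) ≤ |S| - 1`; for `S = V` the cut is empty and
equality holds. -/

lemma ne_of_mk_mem_Edges {n : ℕ} {a b : Fin n} (he : s(a, b) ∈ Edges n) : a ≠ b := by
  simpa [Edges] using he

lemma cutSet_singleton (n : ℕ) (v : Fin n) :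
    cutSet n {v} = (Edges n).filter (v ∈ ·) := by
  ext e
  simp only [cutSet, mem_filter, mem_singleton, and_congr_right_iff]
  intro he
  constructor
  · rintro ⟨_, w, rfl, rfl, -⟩
    exact Sym2.mem_mk_left _ _
  · intro hv
    obtain ⟨w, rfl⟩ := Sym2.mem_iff_exists.mp hv
    exact ⟨v, w, rfl, rfl, (ne_of_mk_mem_Edges he).symm⟩

lemma mk_mem_inSet {n : ℕ} {S : Finset (Fin n)} {a b : Fin n} (he : s(a, b) ∈ Edges n) :
    s(a, b) ∈ inSet n S ↔ a ∈ S ∧ b ∈ S := by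
  simp [inSet, he]

lemma mk_mem_cutSet {n : ℕ} {S : Finset (Fin n)} {a b : Fin n} (he : s(a, b) ∈ Edges n) :
    s(a, b) ∈ cutSet n S ↔ a ∈ S ∧ b ∉ S ∨ b ∈ S ∧ a ∉ S := by
  simp only [cutSet, mem_filter, he, true_and, Sym2.eq_iff]
  constructor
  · rintro ⟨u, w, (⟨rfl, rfl⟩ | ⟨rfl, rfl⟩), hu, hw⟩
    exacts [Or.inl ⟨hu, hw⟩, Or.inr ⟨hu, hw⟩]
  · rintro (⟨ha, hb⟩ | ⟨hb, ha⟩)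
    exacts [⟨a, b, Or.inl ⟨rfl, rfl⟩, ha, hb⟩, ⟨b, a, Or.inr ⟨rfl, rfl⟩, hb, ha⟩]

lemma sum_ite_mem_mk {α M : Type*} [DecidableEq α] [AddCommMonoid M] {S : Finset α} {a b : α}
    (hab : a ≠ b) (c : M) :
    ∑ v ∈ S, (if v ∈ s(a, b) then c else 0) =
      (if a ∈ S then c else 0) + (if b ∈ S then c else 0) := by
  have h : ∀ v, (if v ∈ s(a, b) then c else 0) =
      (if a = v then c else 0) + (if b = v then c else 0) := by
    intro v
    by_cases hav : a = v <;> by_cases hbv : b = v <;> simp_all [Sym2.mem_iff, eq_comm]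
  simp only [h, sum_add_distrib, sum_ite_eq]

theorem sum_cutSet_singleton (n : ℕ) (S : Finset (Fin n)) (x : Sym2 (Fin n) → ℝ) :
    ∑ v ∈ S, ∑ e ∈ cutSet n {v}, x e = 2 * ∑ e ∈ inSet n S, x e + ∑ e ∈ cutSet n S, x e := by
  have per_edge : ∀ e ∈ Edges n, ∑ v ∈ S, (if v ∈ e then x e else 0) =
      2 * (if e ∈ inSet n S then x e else 0) + (if e ∈ cutSet n S then x e else 0) := by
    intro e he
    induction e using Sym2.ind with
    | _ a b =>
      simp only [sum_ite_mem_mk (ne_of_mk_mem_Edges he), mk_mem_inSet he, mk_mem_cutSet he]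
      by_cases ha : a ∈ S <;> by_cases hb : b ∈ S <;> simp [ha, hb, two_mul]
  simp only [cutSet_singleton, sum_filter]
  have hin : Edges n ∩ inSet n S = inSet n S := inter_eq_right.mpr (filter_subset _ _)
  have hcut : Edges n ∩ cutSet n S = cutSet n S := inter_eq_right.mpr (filter_subset _ _)
  rw [sum_comm, sum_congr rfl per_edge, sum_add_distrib, ← mul_sum, sum_ite_mem, sum_ite_mem,
    hin, hcut]

lemma sum_cutSet_univ (n : ℕ) (x : Sym2 (Fin n) → ℝ) : ∑ e ∈ cutSet n univ, x e = 0 := by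
  simp [cutSet]

lemma inSet_univ (n : ℕ) : inSet n univ = Edges n := by
  simp [inSet]

namespace HKPathFeasible

variable {n : ℕ} {s t : Fin n} {x : Sym2 (Fin n) → ℝ}

lemma sum_cutSet_singleton (hst : s ≠ t) (hx : HKPathFeasible n s t x) (S : Finset (Fin n)) :
    ∑ v ∈ S, ∑ e ∈ cutSet n {v}, x e =
      2 * S.card - (if s ∈ S then 1 else 0) - (if t ∈ S then 1 else 0) := by
  obtain ⟨-, hs, ht, hint, -, -⟩ := hx
  have h : ∀ v, ∑ e ∈ cutSet n {v}, x e =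
      2 - (if s = v then (1 : ℝ) else 0) - (if t = v then 1 else 0) := by
    intro v
    rcases eq_or_ne s v with rfl | hsv
    · norm_num [hs, hst.symm]
    rcases eq_or_ne t v with rfl | htv
    · norm_num [ht, hsv]
    · simp [hint v hsv.symm htv.symm, hsv, htv]
  simp only [h, sum_sub_distrib, sum_const, sum_ite_eq, nsmul_eq_mul, mul_comm]

/-- At `S = univ` both sides vanish. -/
lemma two_sub_le_sum_cutSet (hx : HKPathFeasible n s t x) {S : Finset (Fin n)} (hS : S.Nonempty) :
    2 - (if s ∈ S then 1 else 0) - (if t ∈ S then 1 else 0) ≤ ∑ e ∈ cutSet n S, x e := by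
  obtain ⟨hnonneg, -, -, -, hodd, heven⟩ := hx
  by_cases hSu : S = univ
  · norm_num [hSu, sum_cutSet_univ]
  by_cases hsS : s ∈ S <;> by_cases htS : t ∈ S <;> simp only [hsS, htS, if_true, if_false]
  · linarith [sum_nonneg fun e (_ : e ∈ cutSet n S) => hnonneg e]
  · linarith [hodd S hS hSu (Or.inl ⟨hsS, htS⟩)]
  · linarith [hodd S hS hSu (Or.inr ⟨hsS, htS⟩)]
  · linarith [heven S hS hSu (by tauto)]

end HKPathFeasible

theorem hk_in_spanning_tree_polytope_general (n : ℕ) (s t : Fin n) (hst : s ≠ t)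
    (x : Sym2 (Fin n) → ℝ) (hx : HKPathFeasible n s t x) :
    (∑ e ∈ Edges n, x e = (n : ℝ) - 1) ∧
    ∀ S : Finset (Fin n), S.Nonempty → ∑ e ∈ inSet n S, x e ≤ (S.card : ℝ) - 1 := by
  have count (S : Finset (Fin n)) :
      2 * ∑ e ∈ inSet n S, x e + ∑ e ∈ cutSet n S, x e =
        2 * S.card - (if s ∈ S then 1 else 0) - (if t ∈ S then 1 else 0) := by
    rw [← sum_cutSet_singleton, hx.sum_cutSet_singleton hst]
  refine ⟨?_, fun S hS => by linarith [count S, hx.two_sub_le_sum_cutSet hS]⟩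
  have h := count univ
  rw [sum_cutSet_univ, inSet_univ] at h
  simp only [mem_univ, if_true, card_univ, Fintype.card_fin] at h
  linarith

/-- (The path Held–Karp polytope lies in the spanning tree polytope.)
Every feasible solution `x` satisfies `x(E) = n − 1` and `x(E(S)) ≤ |S| − 1` for every
nonempty `S ⊆ V`. -/
theorem hk_in_spanning_tree_polytope (n : ℕ) (hn : 2 ≤ n) (s t : Fin n) (hst : s ≠ t)
    (x : Sym2 (Fin n) → ℝ) (hx : HKPathFeasible n s t x) :
    (∑ e ∈ Edges n, x e = (n : ℝ) - 1) ∧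
    ∀ S : Finset (Fin n), S.Nonempty → ∑ e ∈ inSet n S, x e ≤ (S.card : ℝ) - 1 :=
  hk_in_spanning_tree_polytope_general n s t hst x hx

end
end TSPPath
end
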